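/- Let r ≥ 1 be an integer. For every matrix A ∈ M_r(ℂ) commuting with f one has Tr(A²) = (1/r)·(Tr A)², and consequently (1/2)·Tr((L₂ + A)²) = Tr(A·L₂) + (1/(2r))·(Tr A)². (This is the formula z² = u² + (u¹)²/(2r) for the restriction of the second trace invariant to the Slodowy slice L₂ + ker(ad_f).) -/
import Mathlib


open Matrix

/-- The regular nilpotent element `L₂ = Σ_{i=1}^{r−1} ε_{i,i+1}` (0-based indexing). -/
noncomputable def L2Mat (r : ℕ) : Matrix (Fin r) (Fin r) ℂ :=
  Matrix.of fun a b => if (a : ℕ) + 1 = (b : ℕ) then 1 else 0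

/-- The nilpotent element `f = Σ_{i=1}^{r−1} i(r−i) ε_{i+1,i}`. -/
noncomputable def fMat (r : ℕ) : Matrix (Fin r) (Fin r) ℂ :=
  Matrix.of fun a b =>
    if (b : ℕ) + 1 = (a : ℕ) then (((b : ℕ) : ℂ) + 1) * ((r : ℂ) - (((b : ℕ) : ℂ) + 1)) else 0

/-- for every `A` commuting with `f`, `Tr(A²) = (1/r)(Tr A)²` and
`(1/2)Tr((L₂+A)²) = Tr(A·L₂) + (1/(2r))(Tr A)²`. -/
theorem trace_square_on_slodowy_slice (r : ℕ) (hr : 1 ≤ r)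
    (A : Matrix (Fin r) (Fin r) ℂ) (hA : A * fMat r = fMat r * A) :
    (A * A).trace = (1 / (r : ℂ)) * A.trace ^ 2 ∧
    (1 / 2 : ℂ) * ((L2Mat r + A) * (L2Mat r + A)).trace =
      (A * L2Mat r).trace + (1 / (2 * (r : ℂ))) * A.trace ^ 2 := by
  have hr0 : 0 < r := hr
  set c : ℕ → ℂ := fun j => ((j : ℂ) + 1) * ((r : ℂ) - ((j : ℂ) + 1)) with hc
  have hcne : ∀ j : ℕ, j + 1 < r → c j ≠ 0 := by
    intro j hj
    have h1 : ((j : ℂ) + 1) ≠ 0 := Nat.cast_add_one_ne_zero j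
    have h2 : (r : ℂ) - ((j : ℂ) + 1) ≠ 0 := by
      have hne : ((j + 1 : ℕ) : ℂ) ≠ ((r : ℕ) : ℂ) := by
        exact_mod_cast Nat.ne_of_lt hj
      push_cast at hne
      exact sub_ne_zero.2 hne.symm
    exact mul_ne_zero h1 h2
  -- the entrywise commutation relation
  have hrel : ∀ i j : Fin r,
      (if h : (j : ℕ) + 1 < r then A i ⟨(j : ℕ) + 1, h⟩ * c j else 0) =
      (if _ : (i : ℕ) ≠ 0 then
        c ((i : ℕ) - 1) * A ⟨(i : ℕ) - 1, lt_of_le_of_lt (Nat.sub_le _ _) i.isLt⟩ j else 0) := by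
    intro i j
    have h0 := congrFun (congrFun hA i) j
    rw [Matrix.mul_apply, Matrix.mul_apply] at h0
    have hL : (∑ k, A i k * fMat r k j) =
        (if h : (j : ℕ) + 1 < r then A i ⟨(j : ℕ) + 1, h⟩ * c j else 0) := by
      by_cases h : (j : ℕ) + 1 < r
      · rw [dif_pos h]
        rw [Finset.sum_eq_single (⟨(j : ℕ) + 1, h⟩ : Fin r)]
        · simp [fMat, c]
        · intro b _ hb
          have : (j : ℕ) + 1 ≠ (b : ℕ) := by
            intro he; apply hb; exact Fin.ext he.symm
          simp [fMat, this]
        · intro hmem; exact absurd (Finset.mem_univ _) hmem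
      · rw [dif_neg h]
        apply Finset.sum_eq_zero
        intro k _
        have : (j : ℕ) + 1 ≠ (k : ℕ) := by
          intro he
          exact h (he ▸ k.isLt)
        simp [fMat, this]
    have hR : (∑ k, fMat r i k * A k j) =
        (if _ : (i : ℕ) ≠ 0 then
          c ((i : ℕ) - 1) * A ⟨(i : ℕ) - 1, lt_of_le_of_lt (Nat.sub_le _ _) i.isLt⟩ j
        else 0) := by
      by_cases h : (i : ℕ) ≠ 0
      · rw [dif_pos h]
        rw [Finset.sum_eq_single (⟨(i : ℕ) - 1, lt_of_le_of_lt (Nat.sub_le _ _) i.isLt⟩ : Fin r)]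
        · have he : ((i : ℕ) - 1) + 1 = (i : ℕ) := Nat.succ_pred_eq_of_pos (Nat.pos_of_ne_zero h)
          simp [fMat, he, c]
        · intro b _ hb
          have : (b : ℕ) + 1 ≠ (i : ℕ) := by
            intro he; apply hb; apply Fin.ext
            simp only []
            omega
          simp [fMat, this]
        · intro hmem; exact absurd (Finset.mem_univ _) hmem
      · rw [dif_neg h]
        push_neg at h
        apply Finset.sum_eq_zero
        intro k _
        have : (k : ℕ) + 1 ≠ (i : ℕ) := by omega
        simp [fMat, this]
    rw [hL, hR] at h0
    exact h0
  -- diagonal is constant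
  have hdiag : ∀ (n : ℕ) (hn : n < r), A ⟨n, hn⟩ ⟨n, hn⟩ = A ⟨0, hr0⟩ ⟨0, hr0⟩ := by
    intro n
    induction n with
    | zero => intro hn; rfl
    | succ m ih =>
      intro hn
      have h := hrel ⟨m + 1, hn⟩ ⟨m, Nat.lt_of_succ_lt hn⟩
      rw [dif_pos (show ((⟨m, Nat.lt_of_succ_lt hn⟩ : Fin r) : ℕ) + 1 < r from hn),
        dif_pos (show ((⟨m + 1, hn⟩ : Fin r) : ℕ) ≠ 0 from Nat.succ_ne_zero m)] at h
      · simp only [Fin.val_mk] at h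
        have hcm := hcne m hn
        have h2 := mul_right_cancel₀ hcm (h.trans (mul_comm _ _))
        exact h2.trans (ih (Nat.lt_of_succ_lt hn))
  -- strictly upper part vanishes
  have hupper : ∀ (n : ℕ) (hn : n < r) (j : Fin r), n < (j : ℕ) → A ⟨n, hn⟩ j = 0 := by
    intro n
    induction n with
    | zero =>
      intro hn j hj
      have hj1 : (j : ℕ) - 1 < r := lt_of_le_of_lt (Nat.sub_le _ _) j.isLt
      have h := hrel ⟨0, hn⟩ ⟨(j : ℕ) - 1, hj1⟩
      rw [dif_pos (show ((⟨(j : ℕ) - 1, hj1⟩ : Fin r) : ℕ) + 1 < r by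
          simp only [Fin.val_mk]; omega),
        dif_neg (show ¬ ((⟨0, hn⟩ : Fin r) : ℕ) ≠ 0 by simp)] at h
      have he : ((j : ℕ) - 1) + 1 = (j : ℕ) := by omega
      simp only [Fin.val_mk] at h
      rw [show (⟨((j : ℕ) - 1) + 1, he ▸ j.isLt⟩ : Fin r) = j from Fin.ext he] at h
      have hcj := hcne ((j : ℕ) - 1) (by omega)
      exact (mul_eq_zero.1 h).resolve_right hcj
    | succ m ih =>
      intro hn j hj
      have hj1 : (j : ℕ) - 1 < r := lt_of_le_of_lt (Nat.sub_le _ _) j.isLt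
      have h := hrel ⟨m + 1, hn⟩ ⟨(j : ℕ) - 1, hj1⟩
      rw [dif_pos (show ((⟨(j : ℕ) - 1, hj1⟩ : Fin r) : ℕ) + 1 < r by
          simp only [Fin.val_mk]; omega),
        dif_pos (show ((⟨m + 1, hn⟩ : Fin r) : ℕ) ≠ 0 from Nat.succ_ne_zero m)] at h
      simp only [Fin.val_mk] at h
      have he : ((j : ℕ) - 1) + 1 = (j : ℕ) := by omega
      rw [show (⟨((j : ℕ) - 1) + 1, he ▸ j.isLt⟩ : Fin r) = j from Fin.ext he] at h
      have hz : A ⟨m, Nat.lt_of_succ_lt hn⟩ ⟨(j : ℕ) - 1, hj1⟩ = 0 := by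
        apply ih; simp only [Fin.val_mk]; omega
      rw [show (⟨m + 1 - 1, lt_of_le_of_lt (Nat.sub_le _ _) hn⟩ : Fin r)
          = (⟨m, Nat.lt_of_succ_lt hn⟩ : Fin r) from Fin.ext (by simp), hz, mul_zero] at h
      have hcj := hcne ((j : ℕ) - 1) (by omega)
      exact (mul_eq_zero.1 h).resolve_right hcj
  have hup : ∀ i j : Fin r, (i : ℕ) < (j : ℕ) → A i j = 0 := by
    intro i j hij
    have : (⟨(i : ℕ), i.isLt⟩ : Fin r) = i := Fin.ext rfl
    rw [← this]; exact hupper (i : ℕ) i.isLt j hij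
  set a0 : ℂ := A ⟨0, hr0⟩ ⟨0, hr0⟩ with ha0
  have hdiag' : ∀ i : Fin r, A i i = a0 := by
    intro i
    have : (⟨(i : ℕ), i.isLt⟩ : Fin r) = i := Fin.ext rfl
    rw [← this]; exact hdiag (i : ℕ) i.isLt
  have htrA : A.trace = (r : ℂ) * a0 := by
    rw [Matrix.trace]
    simp only [Matrix.diag_apply]
    rw [Finset.sum_congr rfl (fun i _ => hdiag' i)]
    simp [mul_comm]
  have htrAA : (A * A).trace = (r : ℂ) * (a0 * a0) := by
    rw [Matrix.trace]
    simp only [Matrix.diag_apply, Matrix.mul_apply]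
    have : ∀ i : Fin r, (∑ j, A i j * A j i) = a0 * a0 := by
      intro i
      rw [Finset.sum_eq_single i]
      · rw [hdiag' i]
      · intro b _ hb
        rcases lt_or_gt_of_ne (fun he : (i : ℕ) = (b : ℕ) => hb (Fin.ext he.symm)) with h | h
        · rw [hup i b h, zero_mul]
        · rw [hup b i h, mul_zero]
      · intro hmem; exact absurd (Finset.mem_univ _) hmem
    rw [Finset.sum_congr rfl (fun i _ => this i)]
    simp [mul_comm]
  have hrC : (r : ℂ) ≠ 0 := Nat.cast_ne_zero.2 (by omega)
  constructor
  · rw [htrAA, htrA]; field_simp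
  · have hLL : (L2Mat r * L2Mat r).trace = 0 := by
      rw [Matrix.trace]
      apply Finset.sum_eq_zero
      intro i _
      simp only [Matrix.diag_apply, Matrix.mul_apply]
      apply Finset.sum_eq_zero
      intro k _
      by_cases h : (i : ℕ) + 1 = (k : ℕ)
      · have : (k : ℕ) + 1 ≠ (i : ℕ) := by omega
        simp [L2Mat, this]
      · simp [L2Mat, h]
    have hexp : (L2Mat r + A) * (L2Mat r + A) =
        L2Mat r * L2Mat r + L2Mat r * A + A * L2Mat r + A * A := by noncomm_ring
    rw [hexp]
    rw [Matrix.trace_add, Matrix.trace_add, Matrix.trace_add, hLL,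
      Matrix.trace_mul_comm (L2Mat r) A, htrAA, htrA]
    field_simp
    ring
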